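/- arXiv:2307.11042 — 2 statements merged into one kernel-verified Lean document; each statement's English description precedes it below -/
import Mathlib

section
/- Let F(x) = (1/2)‖x‖² for a semi-norm ‖·‖ on ℝⁿ, and let R be a positive definite matrix such that F(x) ≤ (u/2)‖x‖_R² for all x and some u > 0. Then for any z ∈ ∂F(x), one has (1/2)‖z‖²_{R⁻¹} ≤ u·F(x). -/
open Matrix

/-- for `F = (1/2)‖·‖²` with `‖·‖` a semi-norm on ℝⁿ and `R`
positive definite with `F(x) ≤ (u/2)‖x‖_R²` for all `x`, every subgradient
`z ∈ ∂F(x)` satisfies `(1/2)‖z‖²_{R⁻¹} ≤ u·F(x)`. -/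
theorem stmt6 {n : ℕ} (N : (Fin n → ℝ) → ℝ)
    (hN0 : ∀ x, 0 ≤ N x)
    (hNadd : ∀ x y, N (x + y) ≤ N x + N y)
    (hNsmul : ∀ (a : ℝ) (x : Fin n → ℝ), N (a • x) = |a| * N x)
    (R : Matrix (Fin n) (Fin n) ℝ) (hR : R.PosDef)
    (u : ℝ) (hu : 0 < u)
    (hle : ∀ x : Fin n → ℝ, (1 / 2) * N x ^ 2 ≤ (u / 2) * (x ⬝ᵥ R.mulVec x))
    (x z : Fin n → ℝ)
    (hz : ∀ w, (1 / 2) * N x ^ 2 + ∑ i, (w i - x i) * z i ≤ (1 / 2) * N w ^ 2) :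
    (1 / 2) * (z ⬝ᵥ R⁻¹.mulVec z) ≤ u * ((1 / 2) * N x ^ 2) := by
  set a : ℝ := N x ^ 2 with ha
  set c : ℝ := x ⬝ᵥ z with hc
  have hdet : IsUnit R.det := isUnit_iff_ne_zero.mpr hR.det_pos.ne'
  -- scaling inequality
  have key : ∀ t : ℝ, (t - 1) * c ≤ (a / 2) * (t ^ 2 - 1) := by
    intro t
    have h := hz (t • x)
    have hs : ∑ i, ((t • x) i - x i) * z i = (t - 1) * c := by
      simp only [Pi.smul_apply, smul_eq_mul, hc, dotProduct]
      rw [Finset.mul_sum]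
      apply Finset.sum_congr rfl
      intro i _
      ring
    rw [hs, hNsmul] at h
    have : (|t| * N x) ^ 2 = t ^ 2 * a := by
      rw [mul_pow, sq_abs, ha]
    rw [this] at h
    nlinarith
  have ha0 : 0 ≤ a := sq_nonneg _
  -- c = a
  have hca : c = a := by
    rcases eq_or_lt_of_le ha0 with h0 | hpos
    · have h1 := key 0
      have h2 := key 2
      nlinarith
    · have h1 := key (1 + (c - a) / a)
      have h2 : (c - a) / a * (a - c) + (a / 2) * ((c - a) / a) ^ 2 ≥ 0 := by nlinarith
      have h3 : -(c - a) ^ 2 / (2 * a) ≥ 0 := by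
        have : (c - a) / a * (a - c) + (a / 2) * ((c - a) / a) ^ 2 =
            -(c - a) ^ 2 / (2 * a) := by
          field_simp
          ring
        linarith [this ▸ h2]
      rw [ge_iff_le, le_div_iff₀ (by linarith : (0:ℝ) < 2 * a)] at h3
      nlinarith [sq_nonneg (c - a)]
  -- main step with w = u⁻¹ • R⁻¹ *ᵥ z
  set w : Fin n → ℝ := u⁻¹ • (R⁻¹ *ᵥ z) with hw
  set Q : ℝ := z ⬝ᵥ R⁻¹.mulVec z with hQ
  have hwz : w ⬝ᵥ z = u⁻¹ * Q := by
    rw [hw, smul_dotProduct, dotProduct_comm, smul_eq_mul]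
  have hRw : R *ᵥ w = u⁻¹ • z := by
    rw [hw, mulVec_smul, mulVec_mulVec, Matrix.mul_nonsing_inv R hdet, one_mulVec]
  have hwRw : w ⬝ᵥ R *ᵥ w = u⁻¹ * (u⁻¹ * Q) := by
    rw [hRw, dotProduct_smul, smul_eq_mul, hwz]
  have hsum : ∑ i, (w i - x i) * z i = u⁻¹ * Q - c := by
    have : ∑ i, (w i - x i) * z i = w ⬝ᵥ z - x ⬝ᵥ z := by
      simp only [dotProduct, ← Finset.sum_sub_distrib]
      apply Finset.sum_congr rfl
      intro i _
      ring
    rw [this, hwz, hc]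
  have h1 := hz w
  have h2 := hle w
  rw [hsum] at h1
  rw [hwRw] at h2
  have hfin : (1 / 2) * a + (u⁻¹ * Q - c) ≤ (u / 2) * (u⁻¹ * (u⁻¹ * Q)) :=
    le_trans h1 h2
  have huu : u ≠ 0 := hu.ne'
  have : (u / 2) * (u⁻¹ * (u⁻¹ * Q)) = Q / (2 * u) := by field_simp
  rw [this, hca] at hfin
  have : Q / (2 * u) ≤ a / 2 := by
    have hui : u⁻¹ * Q = Q / u := by ring
    rw [hui] at hfin
    have : Q / u - Q / (2 * u) = Q / (2 * u) := by field_simp; ring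
    linarith
  calc (1 / 2) * Q = u * (Q / (2 * u)) := by field_simp
    _ ≤ u * (a / 2) := by apply mul_le_mul_of_nonneg_left this hu.le
    _ = u * ((1 / 2) * a) := by ring
end

section
/- Consider the discrete-time hypergraph heat diffusion x_{t+1} = x_t − D⁻¹ L^D(x_t), where L^D(x) is the minimum ‖·‖_{D⁻¹}-norm element of the subdifferential L(x) = ∂U(x). Then for all t, ‖x_{t+1} − π(x₀)‖_D² ≤ ‖x_t − π(x₀)‖_D² − 2U(x_t). -/
open Finset

/-- `min_{u ∈ ℝ} N(x − u·1)`, the shift-minimized hyperedge norm. -/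
noncomputable def edgeMin {V : Type*} (N : (V → ℝ) → ℝ) (x : V → ℝ) : ℝ :=
  sInf (Set.range fun u : ℝ => N (fun i => x i - u))

/-- The hypergraph potential `U(x) = (1/2) Σ_h w_h (min_u ‖x_h − u·1_h‖_h)²`. -/
noncomputable def hU {V E : Type*} [Fintype E] (w : E → ℝ)
    (N : E → (V → ℝ) → ℝ) (x : V → ℝ) : ℝ :=
  (1 / 2) * ∑ e, w e * (edgeMin (N e) x) ^ 2

/-- The degree `deg(i) = Σ_{h ∋ i} w_h`. -/
noncomputable def hdeg {V E : Type*} [Fintype E] [DecidableEq V]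
    (edge : E → Finset V) (w : E → ℝ) (i : V) : ℝ :=
  ∑ e, if i ∈ edge e then w e else 0

/-- The subdifferential of `f` at `x` (Euclidean inner product). -/
def subdiff {V : Type*} [Fintype V] (f : (V → ℝ) → ℝ) (x : V → ℝ) :
    Set (V → ℝ) :=
  {z | ∀ w, f x + ∑ i, (w i - x i) * z i ≤ f w}

section aux
variable {V : Type*} [Fintype V] [DecidableEq V]

lemma edgeMin_nonneg (N : (V → ℝ) → ℝ) (hN0 : ∀ y, 0 ≤ N y) (x : V → ℝ) :
    0 ≤ edgeMin N x :=
  Real.sInf_nonneg (by rintro y ⟨u, rfl⟩; exact hN0 _)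

lemma edgeMin_le (N : (V → ℝ) → ℝ) (hN0 : ∀ y, 0 ≤ N y) (x : V → ℝ) (u : ℝ) :
    edgeMin N x ≤ N (fun i => x i - u) :=
  csInf_le ⟨0, by rintro y ⟨v, rfl⟩; exact hN0 _⟩ ⟨u, rfl⟩

lemma edgeMin_le_self (N : (V → ℝ) → ℝ) (hN0 : ∀ y, 0 ≤ N y) (x : V → ℝ) :
    edgeMin N x ≤ N x := by
  have h := edgeMin_le N hN0 x 0
  simpa using h

lemma edgeMin_add (N : (V → ℝ) → ℝ) (hN0 : ∀ y, 0 ≤ N y)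
    (hNadd : ∀ y y', N (y + y') ≤ N y + N y') (x y : V → ℝ) :
    edgeMin N (fun i => x i + y i) ≤ edgeMin N x + edgeMin N y := by
  have key : ∀ u u' : ℝ, edgeMin N (fun i => x i + y i)
      ≤ N (fun i => x i - u) + N (fun i => y i - u') := by
    intro u u'
    have h1 : (fun i => (x i + y i) - (u + u'))
        = (fun i => x i - u) + (fun i => y i - u') := by
      funext i; simp only [Pi.add_apply]; ring
    calc edgeMin N (fun i => x i + y i) ≤ N (fun i => (x i + y i) - (u + u')) :=
          edgeMin_le N hN0 _ _
      _ = N ((fun i => x i - u) + (fun i => y i - u')) := by rw [h1]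
      _ ≤ _ := hNadd _ _
  have h2 : ∀ u, edgeMin N (fun i => x i + y i) - N (fun i => x i - u) ≤ edgeMin N y := by
    intro u
    apply le_csInf (Set.range_nonempty _)
    rintro b ⟨u', rfl⟩
    linarith [key u u']
  have h3 : edgeMin N (fun i => x i + y i) - edgeMin N y ≤ edgeMin N x := by
    apply le_csInf (Set.range_nonempty _)
    rintro b ⟨u, rfl⟩
    linarith [h2 u]
  linarith

lemma edgeMin_shift (N : (V → ℝ) → ℝ) (x : V → ℝ) (s : ℝ) :
    edgeMin N (fun i => x i + s) = edgeMin N x := by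
  unfold edgeMin
  congr 1
  ext b
  constructor
  · rintro ⟨u, rfl⟩
    refine ⟨u - s, ?_⟩
    show N _ = N _
    congr 1; funext i; ring
  · rintro ⟨u, rfl⟩
    refine ⟨u + s, ?_⟩
    show N _ = N _
    congr 1; funext i; ring

lemma edgeMin_smul (N : (V → ℝ) → ℝ) (hNsmul : ∀ (a : ℝ) (y : V → ℝ), N (a • y) = |a| * N y)
    (x : V → ℝ) {c : ℝ} (hc : 0 < c) :
    edgeMin N (fun i => c * x i) = c * edgeMin N x := by
  unfold edgeMin
  rw [show c * sInf (Set.range fun u : ℝ => N (fun i => x i - u))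
        = c • sInf (Set.range fun u : ℝ => N (fun i => x i - u)) from rfl,
    ← Real.sInf_smul_of_nonneg hc.le]
  congr 1
  ext b
  constructor
  · rintro ⟨u, rfl⟩
    refine ⟨N (fun i => x i - u / c), ⟨u / c, rfl⟩, ?_⟩
    have h1 : (fun i => c * x i - u) = c • (fun i => x i - u / c) := by
      funext i
      simp only [Pi.smul_apply, smul_eq_mul]
      field_simp
    show c * N (fun i => x i - u / c) = N (fun i => c * x i - u)
    rw [h1, hNsmul, abs_of_pos hc]
  · rintro ⟨b', ⟨u, rfl⟩, rfl⟩
    refine ⟨c * u, ?_⟩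
    have h1 : (fun i => c * x i - c * u) = c • (fun i => x i - u) := by
      funext i; simp only [Pi.smul_apply, smul_eq_mul]; ring
    show N (fun i => c * x i - c * u) = c * N (fun i => x i - u)
    rw [h1, hNsmul, abs_of_pos hc]

lemma edgeMin_zero (N : (V → ℝ) → ℝ) (hN0 : ∀ y, 0 ≤ N y)
    (hNsmul : ∀ (a : ℝ) (y : V → ℝ), N (a • y) = |a| * N y) :
    edgeMin N (0 : V → ℝ) = 0 := by
  have hN00 : N (0 : V → ℝ) = 0 := by
    have h := hNsmul 0 0
    simpa using h
  refine le_antisymm ?_ (edgeMin_nonneg N hN0 _)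
  calc edgeMin N (0 : V → ℝ) ≤ N (0 : V → ℝ) := edgeMin_le_self N hN0 _
    _ = 0 := hN00

lemma exists_subgrad (s : Finset V) (N : (V → ℝ) → ℝ)
    (hN0 : ∀ y, 0 ≤ N y)
    (hNadd : ∀ y y', N (y + y') ≤ N y + N y')
    (hNsmul : ∀ (a : ℝ) (y : V → ℝ), N (a • y) = |a| * N y)
    (hNloc : ∀ y y', (∀ i ∈ s, y i = y' i) → N y = N y')
    (hNle : ∀ y, N y ≤ Real.sqrt (∑ i ∈ s, (y i) ^ 2))
    (x : V → ℝ) :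
    ∃ g : V → ℝ, (∀ y, (∑ i, y i * g i) ≤ edgeMin N y) ∧
      edgeMin N x = ∑ i, x i * g i ∧ (∑ i, g i ^ 2) ≤ 1 ∧ ∀ i ∉ s, g i = 0 := by
  have hN00 : N (0 : V → ℝ) = 0 := by
    have h := hNsmul 0 0; simpa using h
  have hem0 : edgeMin N (0 : V → ℝ) = 0 := edgeMin_zero N hN0 hNsmul
  have hemle : ∀ y, edgeMin N y ≤ N y := edgeMin_le_self N hN0
  have hemnn : ∀ y, 0 ≤ edgeMin N y := edgeMin_nonneg N hN0
  -- sublinearity data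
  have Nhom : ∀ c : ℝ, 0 < c → ∀ y : V → ℝ, edgeMin N (c • y) = c * edgeMin N y := by
    intro c hc y
    have h := edgeMin_smul N hNsmul y hc
    have h2 : (fun i => c * y i) = c • y := rfl
    rwa [h2] at h
  have Nadd : ∀ y y' : V → ℝ, edgeMin N (y + y') ≤ edgeMin N y + edgeMin N y' := by
    intro y y'
    have h := edgeMin_add N hN0 hNadd y y'
    have h2 : (fun i => y i + y' i) = y + y' := rfl
    rwa [h2] at h
  -- partial linear map on span {x}
  have H : ∀ c : ℝ, c • x = 0 → c • edgeMin N x = 0 := by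
    intro c hc
    rcases smul_eq_zero.1 hc with h | h
    · rw [h, zero_smul]
    · rw [h, hem0, smul_zero]
  set pm := LinearPMap.mkSpanSingleton' (σ := RingHom.id ℝ) x (edgeMin N x) H with hpm
  have hdom : ∀ p : pm.domain, pm p ≤ edgeMin N p := by
    intro p
    obtain ⟨c, hc⟩ := Submodule.mem_span_singleton.1 p.2
    have hmem : c • x ∈ pm.domain := by rw [hc]; exact p.2
    have e2 : p = ⟨c • x, hmem⟩ := Subtype.ext hc.symm
    rw [e2, LinearPMap.mkSpanSingleton'_apply, RingHom.id_apply]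
    rcases lt_trichotomy c 0 with h | h | h
    · have : c • edgeMin N x ≤ 0 := by
        rw [smul_eq_mul]
        exact mul_nonpos_of_nonpos_of_nonneg h.le (hemnn x)
      exact this.trans (hemnn _)
    · subst h
      simp only [zero_smul]
      exact hemnn _
    · rw [smul_eq_mul, ← Nhom c h x]
  obtain ⟨g, hg1, hg2⟩ := exists_extension_of_le_sublinear pm (edgeMin N) Nhom Nadd hdom
  have hgx : g x = edgeMin N x := by
    have hx1 : x ∈ pm.domain := Submodule.mem_span_singleton_self x
    have h5 := hg1 ⟨x, hx1⟩
    have h6 : pm ⟨x, hx1⟩ = edgeMin N x :=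
      LinearPMap.mkSpanSingleton'_apply_self x (edgeMin N x) H hx1
    rw [h5, h6]
  set gv : V → ℝ := fun i => g (fun j => if i = j then (1 : ℝ) else 0) with hgv
  have hrep : ∀ y, g y = ∑ i, y i * gv i := by
    intro y
    rw [LinearMap.pi_apply_eq_sum_univ g y]
    exact Finset.sum_congr rfl fun i _ => by rw [smul_eq_mul]
  refine ⟨gv, ?_, ?_, ?_, ?_⟩
  · intro y
    rw [← hrep y]; exact hg2 y
  · rw [← hrep x, hgx]
  · -- ℓ² bound
    set S := ∑ i, gv i ^ 2 with hS
    have hSnn : 0 ≤ S := Finset.sum_nonneg fun i _ => sq_nonneg _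
    have hggv : g gv = S := by
      rw [hrep gv]
      exact Finset.sum_congr rfl fun i _ => by rw [sq]
    have hle : S ≤ Real.sqrt S := by
      calc S = g gv := hggv.symm
        _ ≤ edgeMin N gv := hg2 gv
        _ ≤ N gv := hemle gv
        _ ≤ Real.sqrt (∑ i ∈ s, gv i ^ 2) := hNle gv
        _ ≤ Real.sqrt S := Real.sqrt_le_sqrt
            (Finset.sum_le_sum_of_subset_of_nonneg (Finset.subset_univ s)
              fun i _ _ => sq_nonneg _)
    nlinarith [hle, Real.sq_sqrt hSnn, hSnn, Real.sqrt_nonneg S]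
  · intro i hi
    have hδ : N (fun j => if i = j then (1 : ℝ) else 0) = 0 := by
      rw [hNloc _ 0 (fun j hj => by
        simp only [Pi.zero_apply]
        rw [if_neg]
        rintro rfl
        exact hi hj)]
      exact hN00
    have hδ' : N (-(fun j => if i = j then (1 : ℝ) else 0)) = 0 := by
      rw [hNloc _ 0 (fun j hj => by
        simp only [Pi.neg_apply, Pi.zero_apply]
        rw [if_neg]
        · simp
        · rintro rfl
          exact hi hj)]
      exact hN00
    have h1 : gv i ≤ 0 := by
      have := (hg2 _).trans ((hemle _).trans_eq hδ)
      exact this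
    have h2 : -gv i ≤ 0 := by
      have h3 : g (-(fun j => if i = j then (1 : ℝ) else 0)) ≤ 0 :=
        (hg2 _).trans ((hemle _).trans_eq hδ')
      rwa [map_neg] at h3
    linarith

end aux

/-- along the discrete-time heat diffusion
`x_{t+1} = x_t − D⁻¹ L^D(x_t)` (with `L^D(x_t)` the minimum `‖·‖_{D⁻¹}`-norm
subgradient of `U` at `x_t`), one has
`‖x_{t+1} − π(x₀)‖_D² ≤ ‖x_t − π(x₀)‖_D² − 2U(x_t)`. -/


theorem stmt7 {V E : Type*} [Fintype V] [Fintype E] [DecidableEq V]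
    (edge : E → Finset V) (w : E → ℝ) (N : E → (V → ℝ) → ℝ)
    (hw : ∀ e, 0 ≤ w e)
    (hN0 : ∀ e y, 0 ≤ N e y)
    (hNadd : ∀ e (y y' : V → ℝ), N e (y + y') ≤ N e y + N e y')
    (hNsmul : ∀ e (a : ℝ) (y : V → ℝ), N e (a • y) = |a| * N e y)
    (hNloc : ∀ e (y y' : V → ℝ), (∀ i ∈ edge e, y i = y' i) → N e y = N e y')
    (hNle : ∀ e (y : V → ℝ), N e y ≤ Real.sqrt (∑ i ∈ edge e, (y i) ^ 2))
    (hdpos : ∀ i, 0 < hdeg edge w i)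
    (x z : ℕ → V → ℝ)
    (hzmem : ∀ t, z t ∈ subdiff (hU w N) (x t))
    (hzmin : ∀ t, ∀ z' ∈ subdiff (hU w N) (x t),
      ∑ i, (z t i) ^ 2 / hdeg edge w i ≤ ∑ i, (z' i) ^ 2 / hdeg edge w i)
    (hstep : ∀ t i, x (t + 1) i = x t i - z t i / hdeg edge w i) :
    ∀ t, ∑ i, hdeg edge w i *
        (x (t + 1) i - (∑ j, hdeg edge w j * x 0 j) / (∑ j, hdeg edge w j)) ^ 2
      ≤ (∑ i, hdeg edge w i *
          (x t i - (∑ j, hdeg edge w j * x 0 j) / (∑ j, hdeg edge w j)) ^ 2)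
        - 2 * hU w N (x t) := by
  intro t
  have hzm := hzmem t
  have hUnn : ∀ y : V → ℝ, 0 ≤ hU w N y := by
    intro y
    apply mul_nonneg (by norm_num)
    exact Finset.sum_nonneg fun e _ => mul_nonneg (hw e) (sq_nonneg _)
  -- Step 1 : ∑ z = 0
  have hsum0 : ∑ i, z t i = 0 := by
    have hsh : ∀ s : ℝ, hU w N (fun i => x t i + s) = hU w N (x t) := by
      intro s
      unfold hU
      congr 1
      exact Finset.sum_congr rfl fun e _ => by rw [edgeMin_shift]
    have h1 := hzm (fun i => x t i + 1)
    have h2 := hzm (fun i => x t i + (-1))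
    rw [hsh 1] at h1
    rw [hsh (-1)] at h2
    simp only [add_sub_cancel_left, one_mul, neg_one_mul, Finset.sum_neg_distrib] at h1 h2
    linarith
  -- Step 2 : 2U ≤ ⟨x, z⟩
  have hxz : 2 * hU w N (x t) ≤ ∑ i, x t i * z t i := by
    have hscale : ∀ (c : ℝ), 0 < c →
        hU w N (fun i => c * x t i) = c ^ 2 * hU w N (x t) := by
      intro c hc
      unfold hU
      have hper : ∀ e ∈ Finset.univ, w e * edgeMin (N e) (fun i => c * x t i) ^ 2
          = c ^ 2 * (w e * edgeMin (N e) (x t) ^ 2) := fun e _ => by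
        rw [edgeMin_smul (N e) (hNsmul e) (x t) hc]; ring
      rw [Finset.sum_congr rfl hper, ← Finset.mul_sum]
      ring
    have key : ∀ ε : ℝ, 0 < ε → ε < 1 →
        2 * hU w N (x t) - ∑ i, x t i * z t i ≤ ε * hU w N (x t) := by
      intro ε hε hε1
      have h := hzm (fun i => (1 - ε) * x t i)
      rw [hscale (1 - ε) (by linarith)] at h
      have he : ∑ i, ((1 - ε) * x t i - x t i) * z t i
          = -ε * ∑ i, x t i * z t i := by
        rw [Finset.mul_sum]
        exact Finset.sum_congr rfl fun i _ => by ring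
      rw [he] at h
      -- h : hU - ε S ≤ (1-ε)^2 hU
      have h3 : ε * ((2 - ε) * hU w N (x t)) ≤ ε * (∑ i, x t i * z t i) := by
        nlinarith [h]
      have h4 : (2 - ε) * hU w N (x t) ≤ ∑ i, x t i * z t i :=
        le_of_mul_le_mul_left h3 hε
      nlinarith [hUnn (x t)]
    by_contra hcon
    push_neg at hcon
    set c1 := 2 * hU w N (x t) - ∑ i, x t i * z t i with hc1
    have hc1pos : 0 < c1 := by simp only [hc1]; linarith
    rcases eq_or_lt_of_le (hUnn (x t)) with hU0 | hUpos
    · have hk := key (1/2) (by norm_num) (by norm_num)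
      rw [← hU0] at hk
      simp only [mul_zero] at hk
      linarith
    · have hεpos : 0 < min (1/2) (c1 / (2 * hU w N (x t))) :=
        lt_min (by norm_num) (div_pos hc1pos (by linarith))
      have hεlt : min (1/2) (c1 / (2 * hU w N (x t))) < 1 :=
        lt_of_le_of_lt (min_le_left _ _) (by norm_num)
      have hk := key _ hεpos hεlt
      have h5 : min (1/2) (c1 / (2 * hU w N (x t))) * hU w N (x t)
          ≤ (c1 / (2 * hU w N (x t))) * hU w N (x t) :=
        mul_le_mul_of_nonneg_right (min_le_right _ _) (hUnn (x t))
      have h6 : (c1 / (2 * hU w N (x t))) * hU w N (x t) = c1 / 2 := by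
        field_simp
      linarith
  -- Step 3 : ∑ z² / d ≤ 2U via explicit minimal-form subgradient
  have hbound : ∑ i, z t i ^ 2 / hdeg edge w i ≤ 2 * hU w N (x t) := by
    choose g hg1 hg2 hg3 hg4 using fun e =>
      exists_subgrad (edge e) (N e) (hN0 e) (hNadd e) (hNsmul e) (hNloc e) (hNle e) (x t)
    set f : E → ℝ := fun e => edgeMin (N e) (x t) with hf
    set z' : V → ℝ := fun i => ∑ e, w e * f e * g e i with hz'
    have hfnn : ∀ e, 0 ≤ f e := fun e => edgeMin_nonneg _ (hN0 e) _
    have hmem : z' ∈ subdiff (hU w N) (x t) := by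
      intro y
      have hswap : ∑ i, (y i - x t i) * z' i
          = ∑ e, w e * f e * (∑ i, (y i - x t i) * g e i) := by
        simp only [hz', Finset.mul_sum]
        rw [Finset.sum_comm]
        exact Finset.sum_congr rfl fun e _ =>
          Finset.sum_congr rfl fun i _ => by ring
      have hterm : ∀ e, w e * f e * (∑ i, (y i - x t i) * g e i)
          ≤ w e / 2 * (edgeMin (N e) y ^ 2 - f e ^ 2) := by
        intro e
        have hi : ∑ i, (y i - x t i) * g e i ≤ edgeMin (N e) y - f e := by
          have hsplit : ∑ i, (y i - x t i) * g e i
              = ∑ i, y i * g e i - ∑ i, x t i * g e i := by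
            rw [← Finset.sum_sub_distrib]
            exact Finset.sum_congr rfl fun i _ => by ring
          rw [hsplit, ← hg2 e]
          have := hg1 e y
          simp only [hf]
          linarith
        nlinarith [hw e, hfnn e, sq_nonneg (edgeMin (N e) y - f e),
          mul_le_mul_of_nonneg_left hi (mul_nonneg (hw e) (hfnn e))]
      have hsum := Finset.sum_le_sum (fun e (_ : e ∈ Finset.univ) => hterm e)
      rw [hswap]
      have hdiff : ∑ e, w e / 2 * (edgeMin (N e) y ^ 2 - f e ^ 2)
          = hU w N y - hU w N (x t) := by
        unfold hU
        rw [Finset.mul_sum, Finset.mul_sum, ← Finset.sum_sub_distrib]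
        exact Finset.sum_congr rfl fun e _ => by simp only [hf]; ring
      rw [hdiff] at hsum
      linarith
    have hz'bound : ∑ i, z' i ^ 2 / hdeg edge w i ≤ 2 * hU w N (x t) := by
      have hCS : ∀ i, z' i ^ 2 ≤ hdeg edge w i * ∑ e, w e * f e ^ 2 * g e i ^ 2 := by
        intro i
        have h1 : z' i = ∑ e, (if i ∈ edge e then Real.sqrt (w e) else 0)
            * (Real.sqrt (w e) * (f e * g e i)) := by
          simp only [hz']
          refine Finset.sum_congr rfl fun e _ => ?_
          by_cases hie : i ∈ edge e
          · rw [if_pos hie,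
              show Real.sqrt (w e) * (Real.sqrt (w e) * (f e * g e i))
                = (Real.sqrt (w e) * Real.sqrt (w e)) * (f e * g e i) by ring,
              Real.mul_self_sqrt (hw e)]
            ring
          · rw [if_neg hie, hg4 e i hie]
            ring
        have h2 := Finset.sum_mul_sq_le_sq_mul_sq Finset.univ
          (fun e => if i ∈ edge e then Real.sqrt (w e) else 0)
          (fun e => Real.sqrt (w e) * (f e * g e i))
        rw [← h1] at h2
        have h3 : ∑ e, (if i ∈ edge e then Real.sqrt (w e) else 0) ^ 2
            = hdeg edge w i := by
          unfold hdeg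
          refine Finset.sum_congr rfl fun e _ => ?_
          split
          · rw [Real.sq_sqrt (hw e)]
          · rw [zero_pow two_ne_zero]
        have h4 : ∑ e, (Real.sqrt (w e) * (f e * g e i)) ^ 2
            = ∑ e, w e * f e ^ 2 * g e i ^ 2 := by
          refine Finset.sum_congr rfl fun e _ => ?_
          rw [mul_pow, Real.sq_sqrt (hw e)]
          ring
        rw [h3, h4] at h2
        exact h2
      have hdiv : ∀ i, z' i ^ 2 / hdeg edge w i ≤ ∑ e, w e * f e ^ 2 * g e i ^ 2 := by
        intro i
        rw [div_le_iff₀ (hdpos i)]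
        calc z' i ^ 2 ≤ hdeg edge w i * ∑ e, w e * f e ^ 2 * g e i ^ 2 := hCS i
          _ = (∑ e, w e * f e ^ 2 * g e i ^ 2) * hdeg edge w i := by ring
      calc ∑ i, z' i ^ 2 / hdeg edge w i
          ≤ ∑ i, ∑ e, w e * f e ^ 2 * g e i ^ 2 :=
            Finset.sum_le_sum fun i _ => hdiv i
        _ = ∑ e, w e * f e ^ 2 * ∑ i, g e i ^ 2 := by
            rw [Finset.sum_comm]
            exact Finset.sum_congr rfl fun e _ => by rw [Finset.mul_sum]
        _ ≤ ∑ e, w e * f e ^ 2 * 1 :=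
            Finset.sum_le_sum fun e _ =>
              mul_le_mul_of_nonneg_left (hg3 e) (mul_nonneg (hw e) (sq_nonneg _))
        _ = 2 * hU w N (x t) := by
            unfold hU
            rw [Finset.mul_sum, Finset.mul_sum]
            exact Finset.sum_congr rfl fun e _ => by simp only [hf]; ring
    exact le_trans (hzmin t z' hmem) hz'bound
  -- Step 4 : final algebra
  set c0 : ℝ := (∑ j, hdeg edge w j * x 0 j) / (∑ j, hdeg edge w j) with hc0
  have hexp : ∀ i, hdeg edge w i * (x (t + 1) i - c0) ^ 2
      = hdeg edge w i * (x t i - c0) ^ 2 - 2 * ((x t i - c0) * z t i)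
        + z t i ^ 2 / hdeg edge w i := by
    intro i
    rw [hstep t i]
    have hdne : hdeg edge w i ≠ 0 := ne_of_gt (hdpos i)
    field_simp
    ring
  rw [Finset.sum_congr rfl fun i (_ : i ∈ Finset.univ) => hexp i,
    Finset.sum_add_distrib, Finset.sum_sub_distrib]
  have h7 : ∑ i, 2 * ((x t i - c0) * z t i) = 2 * ∑ i, x t i * z t i := by
    have hterm : ∀ i, 2 * ((x t i - c0) * z t i)
        = 2 * (x t i * z t i) - (2 * c0) * z t i := fun i => by ring
    rw [Finset.sum_congr rfl fun i (_ : i ∈ Finset.univ) => hterm i,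
      Finset.sum_sub_distrib, ← Finset.mul_sum, ← Finset.mul_sum, hsum0]
    ring
  rw [h7]
  linarith
end
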